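/- Let s, κ ∈ ℂ and let σ, σ̃ : ℝ → ℂ be functions. Suppose R : ℝ → Matrix (Fin 3) (Fin 3) ℂ is differentiable, R(x) is unit lower triangular for every x, and R'(x) + R(x)·F(σ̃)(x) = F(σ)(x)·R(x) for all x ∈ ℝ. Then for all x ∈ ℝ: R₂₁(x) = (s+κ)(σ(x) − σ̃(x)) and R₃₂(x) = (s−κ)(σ(x) − σ̃(x)). -/

import Mathlib

/-- The matrix F(σ) associated with the differential expression
ℓ_{σ,s,κ}(y) = y''' + s(σ'y)' + sσ'y' + κσ''y. -/
noncomputable def Fmat (s κ : ℂ) (σ : ℝ → ℂ) (x : ℝ) : Matrix (Fin 3) (Fin 3) ℂ :=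
  !![ -(s + κ) * σ x, 1, 0;
      -(3 * κ ^ 2 / 2 + s ^ 2 / 2 + 2 * κ * s) * σ x ^ 2, 2 * κ * σ x, 1;
      κ * (κ ^ 2 - s ^ 2) * σ x ^ 3,
        -(3 * κ ^ 2 / 2 + s ^ 2 / 2 - 2 * κ * s) * σ x ^ 2, (s - κ) * σ x ]

/-- A 3×3 matrix is unit lower triangular if its diagonal entries are 1 and the
entries above the diagonal are 0. -/
def UnitLowerTriangular (A : Matrix (Fin 3) (Fin 3) ℂ) : Prop :=
  (∀ i, A i i = 1) ∧ ∀ i j : Fin 3, i < j → A i j = 0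

/-! Since the diagonal of `R` is constantly `1`, the diagonal of `R'` vanishes, and the
`(0,0)` and `(1,1)` entries of `R' + R F(σ̃) = F(σ) R` become linear equations for `R₂₁` and
`R₃₂` in terms of the entries of `F(σ)` and `F(σ̃)`. -/

theorem HasDerivAt.eq_zero_of_forall_eq {𝕜 F : Type*} [NontriviallyNormedField 𝕜]
    [NormedAddCommGroup F] [NormedSpace 𝕜 F] {f : 𝕜 → F} {f' c : F} {x : 𝕜}
    (h : HasDerivAt f f' x) (hf : ∀ t, f t = c) : f' = 0 := by
  rw [funext hf] at h
  exact h.unique (hasDerivAt_const x c)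

namespace UnitLowerTriangular

variable {R : Matrix (Fin 3) (Fin 3) ℂ} (hR : UnitLowerTriangular R)
  (A : Matrix (Fin 3) (Fin 3) ℂ)
include hR

theorem mul_apply_zero_zero : (R * A) 0 0 = A 0 0 := by
  simp [Matrix.mul_apply, Fin.sum_univ_three, hR.1 0, hR.2 0 1 (by decide), hR.2 0 2 (by decide)]

theorem mul_apply_one_one : (R * A) 1 1 = R 1 0 * A 0 1 + A 1 1 := by
  simp [Matrix.mul_apply, Fin.sum_univ_three, hR.1 1, hR.2 1 2 (by decide)]

theorem apply_mul_zero_zero : (A * R) 0 0 = A 0 0 + A 0 1 * R 1 0 + A 0 2 * R 2 0 := by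
  simp [Matrix.mul_apply, Fin.sum_univ_three, hR.1 0]

theorem apply_mul_one_one : (A * R) 1 1 = A 1 1 + A 1 2 * R 2 1 := by
  simp [Matrix.mul_apply, Fin.sum_univ_three, hR.1 1, hR.2 0 1 (by decide)]

end UnitLowerTriangular

/-- If R is a differentiable unit lower triangular matrix function satisfying
R' + R·F(σ̃) = F(σ)·R, then the subdiagonal entries of R are
R₂₁ = (s+κ)(σ − σ̃) and R₃₂ = (s−κ)(σ − σ̃). -/
theorem subdiagonal_entries (s κ : ℂ) (σ σtil : ℝ → ℂ)
    (R R' : ℝ → Matrix (Fin 3) (Fin 3) ℂ)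
    (hR : ∀ (x : ℝ) (i j : Fin 3), HasDerivAt (fun t => R t i j) (R' x i j) x)
    (hTri : ∀ x : ℝ, UnitLowerTriangular (R x))
    (heq : ∀ x : ℝ, R' x + R x * Fmat s κ σtil x = Fmat s κ σ x * R x) :
    ∀ x : ℝ, R x 1 0 = (s + κ) * (σ x - σtil x)
      ∧ R x 2 1 = (s - κ) * (σ x - σtil x) := by
  intro x
  have hR'_diag (i : Fin 3) : R' x i i = 0 :=
    (hR x i i).eq_zero_of_forall_eq fun t => (hTri t).1 i
  have h00 := congr_fun₂ (heq x) 0 0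
  have h11 := congr_fun₂ (heq x) 1 1
  rw [Matrix.add_apply, hR'_diag, (hTri x).mul_apply_zero_zero,
    (hTri x).apply_mul_zero_zero] at h00
  rw [Matrix.add_apply, hR'_diag, (hTri x).mul_apply_one_one,
    (hTri x).apply_mul_one_one] at h11
  simp only [Fmat, Matrix.of_apply, Matrix.cons_val', Matrix.cons_val_zero, Matrix.cons_val_one,
    Matrix.cons_val_two, Matrix.empty_val', Matrix.cons_val_fin_one, Matrix.tail_cons,
    Matrix.head_cons] at h00 h11
  constructor
  · linear_combination -h00
  · linear_combination -h11 - h00
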